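/- For all quaternionic matrices M ∈ ℍ^{n×m} and N ∈ ℍ^{m×n}, det 𝒵[I_n + MN] = det 𝒵[I_m + NM]. Equivalently, Sdet(I + MN) = Sdet(I + NM). -/

import Mathlib

open Matrix
open scoped NNReal

/-- The complex number `z` with `q = z + j·w` for a quaternion `q`. -/
noncomputable def quatC1 (q : Quaternion ℝ) : ℂ := ⟨q.re, q.imI⟩

/-- The complex number `w` with `q = z + j·w` for a quaternion `q`. -/
noncomputable def quatC2 (q : Quaternion ℝ) : ℂ := ⟨q.imJ, -q.imK⟩

/-- The complexification `𝒵[M] = [[M₁, −M₂*],[M₂, M₁*]]` of a quaternionic matrix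
`M = M₁ + j·M₂`, where `*` denotes entrywise complex conjugation. -/
noncomputable def Zmat {m : Type*} [Fintype m] [DecidableEq m]
    (M : Matrix m m (Quaternion ℝ)) : Matrix (m ⊕ m) (m ⊕ m) ℂ :=
  Matrix.fromBlocks (M.map quatC1) (-(M.map fun q => star (quatC2 q)))
    (M.map quatC2) (M.map fun q => star (quatC1 q))

/-- Rectangular complexification. -/
noncomputable def Zr {p q : Type*} (M : Matrix p q (Quaternion ℝ)) :
    Matrix (p ⊕ p) (q ⊕ q) ℂ :=
  Matrix.fromBlocks (M.map quatC1) (-(M.map fun x => star (quatC2 x)))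
    (M.map quatC2) (M.map fun x => star (quatC1 x))

lemma Zmat_eq_Zr {m : Type*} [Fintype m] [DecidableEq m]
    (M : Matrix m m (Quaternion ℝ)) : Zmat M = Zr M := rfl

lemma quatC1_mul (a b : Quaternion ℝ) :
    quatC1 (a * b) = quatC1 a * quatC1 b - star (quatC2 a) * quatC2 b := by
  apply Complex.ext <;>
    simp [quatC1, quatC2, Quaternion.re_mul, Quaternion.imI_mul, Complex.ext_iff] <;> ring

lemma quatC2_mul (a b : Quaternion ℝ) :
    quatC2 (a * b) = star (quatC1 a) * quatC2 b + quatC2 a * quatC1 b := by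
  apply Complex.ext <;>
    simp [quatC1, quatC2, Quaternion.imJ_mul, Quaternion.imK_mul, Complex.ext_iff] <;> ring

lemma quatC1_zero : quatC1 0 = 0 := by simp [quatC1, Complex.ext_iff, Quaternion.re_zero, Quaternion.imI_zero]

lemma quatC2_zero : quatC2 0 = 0 := by simp [quatC2, Complex.ext_iff, Quaternion.imJ_zero, Quaternion.imK_zero]

lemma quatC1_add (a b : Quaternion ℝ) : quatC1 (a + b) = quatC1 a + quatC1 b := by
  simp [quatC1, Complex.ext_iff]

lemma quatC2_add (a b : Quaternion ℝ) : quatC2 (a + b) = quatC2 a + quatC2 b := by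
  simp [quatC2, Complex.ext_iff]; ring

lemma quatC1_one : quatC1 1 = 1 := by simp [quatC1, Complex.ext_iff, Quaternion.re_one, Quaternion.imI_one]

lemma quatC2_one : quatC2 1 = 0 := by simp [quatC2, Complex.ext_iff, Quaternion.imJ_one, Quaternion.imK_one]

lemma quatC1_sum {ι : Type*} (s : Finset ι) (f : ι → Quaternion ℝ) :
    quatC1 (∑ i ∈ s, f i) = ∑ i ∈ s, quatC1 (f i) := by
  induction s using Finset.cons_induction with
  | empty => simp [quatC1_zero]
  | cons a s ha ih => simp [Finset.sum_cons, quatC1_add, ih]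

lemma quatC2_sum {ι : Type*} (s : Finset ι) (f : ι → Quaternion ℝ) :
    quatC2 (∑ i ∈ s, f i) = ∑ i ∈ s, quatC2 (f i) := by
  induction s using Finset.cons_induction with
  | empty => simp [quatC2_zero]
  | cons a s ha ih => simp [Finset.sum_cons, quatC2_add, ih]

lemma Zr_mul {p q r : Type*} [Fintype q]
    (M : Matrix p q (Quaternion ℝ)) (N : Matrix q r (Quaternion ℝ)) :
    Zr (M * N) = Zr M * Zr N := by
  ext i j
  cases i <;> cases j <;>
  · simp only [Zr, Matrix.mul_apply, Matrix.fromBlocks_apply₁₁, Matrix.fromBlocks_apply₁₂,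
      Matrix.fromBlocks_apply₂₁, Matrix.fromBlocks_apply₂₂, Matrix.map_apply, Matrix.neg_apply,
      Matrix.add_apply, Fintype.sum_sum_type, quatC1_sum, quatC2_sum, map_sum, star_sum, neg_neg,
      ← Finset.sum_neg_distrib, ← Finset.sum_add_distrib]
    refine Finset.sum_congr rfl fun x _ => ?_
    simp only [quatC1_mul, quatC2_mul, starRingEnd_apply, star_sub, star_add, star_mul', star_star, star_neg]
    ring

lemma Zr_add {p q : Type*} (M N : Matrix p q (Quaternion ℝ)) :
    Zr (M + N) = Zr M + Zr N := by
  ext i j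
  cases i <;> cases j <;>
    simp [Zr, quatC1_add, quatC2_add, add_comm]

lemma Zr_one {p : Type*} [Fintype p] [DecidableEq p] :
    Zr (1 : Matrix p p (Quaternion ℝ)) = 1 := by
  have h1 : (1 : Matrix p p (Quaternion ℝ)).map quatC1 = 1 := by
    ext i j; by_cases h : i = j <;> simp [Matrix.one_apply, h, quatC1_one, quatC1_zero]
  have h2 : (1 : Matrix p p (Quaternion ℝ)).map quatC2 = 0 := by
    ext i j; by_cases h : i = j <;> simp [Matrix.one_apply, h, quatC2_one, quatC2_zero]
  have h3 : (1 : Matrix p p (Quaternion ℝ)).map (fun x => star (quatC1 x)) = 1 := by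
    ext i j; by_cases h : i = j <;> simp [Matrix.one_apply, h, quatC1_one, quatC1_zero]
  have h4 : (1 : Matrix p p (Quaternion ℝ)).map (fun x => star (quatC2 x)) = 0 := by
    ext i j; by_cases h : i = j <;> simp [Matrix.one_apply, h, quatC2_one, quatC2_zero]
  rw [Zr, h1, h2, h3, h4, neg_zero, Matrix.fromBlocks_one]

/-- Commutation formula: `det 𝒵[I + MN] = det 𝒵[I + NM]`, i.e.
`Sdet(I + MN) = Sdet(I + NM)`. -/
theorem qdet_one_add_mul_comm (n m : ℕ)
    (M : Matrix (Fin n) (Fin m) (Quaternion ℝ)) (N : Matrix (Fin m) (Fin n) (Quaternion ℝ)) :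
    (Zmat (1 + M * N)).det = (Zmat (1 + N * M)).det := by
  rw [Zmat_eq_Zr, Zmat_eq_Zr, Zr_add, Zr_add, Zr_one, Zr_one, Zr_mul, Zr_mul]
  exact Matrix.det_one_add_mul_comm (Zr M) (Zr N)
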